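/- In an SMRD design with potential-outcome matrices y(γ), the following Hoeffding-type decomposition holds pointwise (as an identity of random variables): m̂_tr = mean(y(tr)) + ē_tr^B + ē_tr^S + ē̄_tr^BS; m̂_ib = mean(y(ib)) + ē_ib^B − ē_ib^S − ē̄_ib^BS; m̂_is = mean(y(is)) − ē_is^B + ē_is^S − ē̄_is^BS; m̂_cc = mean(y(cc)) − ē_cc^B − ē_cc^S + ē̄_cc^BS. Moreover E[ē_γ^B] = E[ē_γ^S] = E[ē̄_γ^BS] = 0 for every γ, and for all γ, γ′ ∈ {tr, ib, is, cc}: Cov(ē_γ^B, ē_{γ′}^S) = 0, Cov(ē_γ^B, ē̄_{γ′}^BS) = 0, and Cov(ē_γ^S, ē̄_{γ′}^BS) = 0. -/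

import Mathlib

/-!
Write the indicator of the rows of group γ as `I_γ / I ± D^B_i` (sign `+` for the treated rows,
`-` for their complement), and likewise for the columns. Expanding `Σ_{i,j} 1_R(i) 1_C(j) y_ij`
against the two-way decomposition `y = mean + row effects + column effects + interaction`, all
cross terms vanish because `D^B`, `D^S`, the effects and the interaction have zero margins; this is
the pointwise decomposition of `m̂_γ`.

Every row lies in the same number of `I_T`-subsets, a fraction `I_T / I` of them, so summing
`Σ_i D^B_i h_i` over all row assignments gives zero, and similarly for columns. Hence `ē^B` has mean
zero, and `ē̄^BS` averages to zero over either assignment with the other one held fixed. As the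
design is a product of the row and column designs, a term depending on the rows only times a term
that averages to zero over the columns has zero mean, which gives the three vanishing covariances.
-/

open MeasureTheory ProbabilityTheory Finset Filter
open scoped ENNReal NNReal

noncomputable section

namespace SMRD

instance (n : ℕ) : MeasurableSpace (Finset (Fin n)) := ⊤

/-- Uniform probability measure on (the coercion to a set of) a finite set of outcomes. -/
def uniformOn {α : Type*} [MeasurableSpace α] (s : Finset α) : Measure α :=
  ((s.card : ℝ≥0∞))⁻¹ • Measure.count.restrict ↑s

/-- Sample space of an SMRD: a pair (set of treated rows, set of treated columns). -/
abbrev Omg (I J : ℕ) := Finset (Fin I) × Finset (Fin J)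

/-- All admissible designs: row sets of size `IT` and column sets of size `JT`. -/
def designSets (I J IT JT : ℕ) : Finset (Omg I J) :=
  (powersetCard IT (univ : Finset (Fin I))) ×ˢ (powersetCard JT (univ : Finset (Fin J)))

/-- The SMRD design measure: uniform over designs. -/
def smrd (I J IT JT : ℕ) : Measure (Omg I J) := uniformOn (designSets I J IT JT)

/-- Uniform measure over the row-treatment sets alone. -/
def rowMeasure (I IT : ℕ) : Measure (Finset (Fin I)) :=
  uniformOn (powersetCard IT (univ : Finset (Fin I)))

variable {I J : ℕ}

def rowMean (A : Fin I → Fin J → ℝ) (i : Fin I) : ℝ := (∑ j, A i j) / J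
def colMean (A : Fin I → Fin J → ℝ) (j : Fin J) : ℝ := (∑ i, A i j) / I
def grandMean (A : Fin I → Fin J → ℝ) : ℝ := (∑ i, ∑ j, A i j) / ((I : ℝ) * J)
/-- Double decentering. -/
def dcr (A : Fin I → Fin J → ℝ) (i : Fin I) (j : Fin J) : ℝ :=
  A i j - rowMean A i - colMean A j + grandMean A

def omegaB (A : Fin I → Fin J → ℝ) : ℝ :=
  (∑ i, (rowMean A i - grandMean A) ^ 2) / ((I : ℝ) - 1)
def omegaS (A : Fin I → Fin J → ℝ) : ℝ :=
  (∑ j, (colMean A j - grandMean A) ^ 2) / ((J : ℝ) - 1)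
def omegaBS (A : Fin I → Fin J → ℝ) : ℝ :=
  (∑ i, ∑ j, dcr A i j ^ 2) / (((I : ℝ) - 1) * ((J : ℝ) - 1))

def xiB (A A' : Fin I → Fin J → ℝ) : ℝ :=
  (∑ i, ((rowMean A i - grandMean A) - (rowMean A' i - grandMean A')) ^ 2) / ((I : ℝ) - 1)
def xiS (A A' : Fin I → Fin J → ℝ) : ℝ :=
  (∑ j, ((colMean A j - grandMean A) - (colMean A' j - grandMean A')) ^ 2) / ((J : ℝ) - 1)
def xiBS (A A' : Fin I → Fin J → ℝ) : ℝ :=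
  (∑ i, ∑ j, (dcr A i j - dcr A' i j) ^ 2) / (((I : ℝ) - 1) * ((J : ℝ) - 1))

/-- The four groups of an SMRD. -/
inductive Gp | tr | ib | is | cc
  deriving DecidableEq

instance instFintypeGp : Fintype Gp :=
  ⟨{Gp.tr, Gp.ib, Gp.is, Gp.cc}, fun x => by cases x <;> simp⟩

/-- Does the group use the treated rows? -/
def rowT : Gp → Bool | .tr => true | .ib => true | .is => false | .cc => false
/-- Does the group use the treated columns? -/
def colT : Gp → Bool | .tr => true | .is => true | .ib => false | .cc => false

def rowSet (ω : Omg I J) (γ : Gp) : Finset (Fin I) := if rowT γ then ω.1 else ω.1ᶜ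
def colSet (ω : Omg I J) (γ : Gp) : Finset (Fin J) := if colT γ then ω.2 else ω.2ᶜ

/-- Deterministic group row size (as a real number). -/
def IszR (I IT : ℕ) (γ : Gp) : ℝ := if rowT γ then (IT : ℝ) else (I : ℝ) - IT
/-- Deterministic group column size (as a real number). -/
def JszR (J JT : ℕ) (γ : Gp) : ℝ := if colT γ then (JT : ℝ) else (J : ℝ) - JT

/-- Sign η^B. -/
def etaB (γ γ' : Gp) : ℝ := if rowT γ = rowT γ' then 1 else -1
/-- Sign η^S. -/
def etaS (γ γ' : Gp) : ℝ := if colT γ = colT γ' then 1 else -1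

/-- Group-mean estimator m̂_γ. -/
def mhat (y : Gp → Fin I → Fin J → ℝ) (γ : Gp) (ω : Omg I J) : ℝ :=
  (∑ i ∈ rowSet ω γ, ∑ j ∈ colSet ω γ, y γ i j) /
    (((rowSet ω γ).card : ℝ) * ((colSet ω γ).card : ℝ))

/-- Covariance of two real random variables. -/
def cov {α : Type*} [MeasurableSpace α] (μ : Measure α) (f g : α → ℝ) : ℝ :=
  ∫ ω, (f ω - ∫ x, f x ∂μ) * (g ω - ∫ x, g x ∂μ) ∂μ

/-- 1-Wasserstein distance between Borel measures on ℝ (infimum over couplings). -/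
def wassersteinDist (μ ν : Measure ℝ) : ℝ≥0∞ :=
  ⨅ (π : Measure (ℝ × ℝ)) (_ : π.map Prod.fst = μ) (_ : π.map Prod.snd = ν),
    ∫⁻ p, ENNReal.ofReal |p.1 - p.2| ∂π

/-- Spectral (ℓ²→ℓ² operator) norm of an I×J matrix. -/
def opNorm (A : Fin I → Fin J → ℝ) : ℝ :=
  ‖LinearMap.toContinuousLinearMap (Matrix.toEuclideanLin (Matrix.of A))‖

/-- Indicator W_i^B. -/
def WB (ω : Omg I J) (i : Fin I) : ℝ := if i ∈ ω.1 then 1 else 0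
/-- Indicator W_j^S. -/
def WS (ω : Omg I J) (j : Fin J) : ℝ := if j ∈ ω.2 then 1 else 0

/-- Within-group row mean Â_{i,•}(γ) (with column index set `Cs`). -/
def rowHat (A : Fin I → Fin J → ℝ) (Cs : Finset (Fin J)) (i : Fin I) : ℝ :=
  (∑ j ∈ Cs, A i j) / (Cs.card : ℝ)
/-- Within-group column mean Â_{•,j}(γ). -/
def colHat (A : Fin I → Fin J → ℝ) (Rs : Finset (Fin I)) (j : Fin J) : ℝ :=
  (∑ i ∈ Rs, A i j) / (Rs.card : ℝ)
/-- Within-group grand mean m̂_γ(A). -/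
def gHat (A : Fin I → Fin J → ℝ) (Rs : Finset (Fin I)) (Cs : Finset (Fin J)) : ℝ :=
  (∑ i ∈ Rs, ∑ j ∈ Cs, A i j) / ((Rs.card : ℝ) * (Cs.card : ℝ))

/-- Empirical within-group covariance of row means. -/
def empRowCov (A B : Fin I → Fin J → ℝ) (γ : Gp) (ω : Omg I J) : ℝ :=
  (∑ i ∈ rowSet ω γ,
      (rowHat A (colSet ω γ) i - gHat A (rowSet ω γ) (colSet ω γ)) *
        (rowHat B (colSet ω γ) i - gHat B (rowSet ω γ) (colSet ω γ))) /
    ((rowSet ω γ).card : ℝ)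

/-- Empirical within-group covariance of column means. -/
def empColCov (A B : Fin I → Fin J → ℝ) (γ : Gp) (ω : Omg I J) : ℝ :=
  (∑ j ∈ colSet ω γ,
      (colHat A (rowSet ω γ) j - gHat A (rowSet ω γ) (colSet ω γ)) *
        (colHat B (rowSet ω γ) j - gHat B (rowSet ω γ) (colSet ω γ))) /
    ((colSet ω γ).card : ℝ)

/-- Empirical within-group covariance of doubly-decentered entries. -/
def empDcrCov (A B : Fin I → Fin J → ℝ) (γ : Gp) (ω : Omg I J) : ℝ :=
  (∑ i ∈ rowSet ω γ, ∑ j ∈ colSet ω γ,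
      (A i j - rowHat A (colSet ω γ) i - colHat A (rowSet ω γ) j +
          gHat A (rowSet ω γ) (colSet ω γ)) *
        (B i j - rowHat B (colSet ω γ) i - colHat B (rowSet ω γ) j +
          gHat B (rowSet ω γ) (colSet ω γ))) /
    (((rowSet ω γ).card : ℝ) * ((colSet ω γ).card : ℝ))

def popRowCov (A B : Fin I → Fin J → ℝ) : ℝ :=
  (∑ i, (rowMean A i - grandMean A) * (rowMean B i - grandMean B)) / (I : ℝ)
def popColCov (A B : Fin I → Fin J → ℝ) : ℝ :=
  (∑ j, (colMean A j - grandMean A) * (colMean B j - grandMean B)) / (J : ℝ)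
def popDcrCov (A B : Fin I → Fin J → ℝ) : ℝ :=
  (∑ i, ∑ j, dcr A i j * dcr B i j) / ((I : ℝ) * (J : ℝ))

/-- Buyer residual term ē_γ^B (deterministic normalizer I_γ ∈ {I_T, I_C}). -/
def ebarB (I J IT : ℕ) (y : Gp → Fin I → Fin J → ℝ) (γ : Gp) (ω : Omg I J) : ℝ :=
  (∑ i, (WB ω i - (IT : ℝ) / I) * (rowMean (y γ) i - grandMean (y γ))) / IszR I IT γ

/-- Seller residual term ē_γ^S (deterministic normalizer J_γ ∈ {J_T, J_C}). -/
def ebarS (I J JT : ℕ) (y : Gp → Fin I → Fin J → ℝ) (γ : Gp) (ω : Omg I J) : ℝ :=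
  (∑ j, (WS ω j - (JT : ℝ) / J) * (colMean (y γ) j - grandMean (y γ))) / JszR J JT γ

/-- Buyer–seller residual term ē̄_γ^BS. -/
def ebarBS (I J IT JT : ℕ) (y : Gp → Fin I → Fin J → ℝ) (γ : Gp) (ω : Omg I J) : ℝ :=
  (∑ i, ∑ j, (WB ω i - (IT : ℝ) / I) * (WS ω j - (JT : ℝ) / J) * dcr (y γ) i j) /
    (IszR I IT γ * JszR J JT γ)

instance (n : ℕ) : MeasurableSingletonClass (Finset (Fin n)) := ⟨fun _ => trivial⟩

lemma integral_uniformOn {α : Type*} [MeasurableSpace α] [MeasurableSingletonClass α]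
    (s : Finset α) (f : α → ℝ) :
    ∫ x, f x ∂uniformOn s = (s.card : ℝ)⁻¹ * ∑ x ∈ s, f x := by
  have hf : IntegrableOn f s Measure.count := by
    rw [← (s : Set α).biUnion_of_singleton]
    simp [integrableOn_finset_iUnion]
  rw [uniformOn, integral_smul_measure, setIntegral_finset s hf]
  simp

lemma cov_eq_integral_mul {α : Type*} [MeasurableSpace α] {μ : Measure α} {f g : α → ℝ}
    (hf : ∫ x, f x ∂μ = 0) (hg : ∫ x, g x ∂μ = 0) : cov μ f g = ∫ x, f x * g x ∂μ := by
  simp [cov, hf, hg]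

section Hoeffding

variable {I J : ℕ} (A : Fin I → Fin J → ℝ)

lemma sum_eq_mul_rowMean (hJ : (J : ℝ) ≠ 0) (i : Fin I) : ∑ j, A i j = J * rowMean A i := by
  rw [rowMean, mul_div_cancel₀ _ hJ]

lemma sum_eq_mul_colMean (hI : (I : ℝ) ≠ 0) (j : Fin J) : ∑ i, A i j = I * colMean A j := by
  rw [colMean, mul_div_cancel₀ _ hI]

lemma sum_sum_eq_mul_grandMean (hI : (I : ℝ) ≠ 0) (hJ : (J : ℝ) ≠ 0) :
    ∑ i, ∑ j, A i j = I * J * grandMean A := by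
  rw [grandMean, mul_div_cancel₀ _ (mul_ne_zero hI hJ)]

variable {A} {a : Fin I → ℝ} {b : Fin J → ℝ}

lemma sum_mul_rowMean_sub (ha : ∑ i, a i = 0) :
    ∑ i, a i * (rowMean A i - grandMean A) = ∑ i, a i * rowMean A i := by
  simp [mul_sub, sum_sub_distrib, ← sum_mul, ha]

lemma sum_mul_colMean_sub (hb : ∑ j, b j = 0) :
    ∑ j, b j * (colMean A j - grandMean A) = ∑ j, b j * colMean A j := by
  simp [mul_sub, sum_sub_distrib, ← sum_mul, hb]

lemma sum_sum_mul_dcr (ha : ∑ i, a i = 0) (hb : ∑ j, b j = 0) :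
    ∑ i, ∑ j, a i * b j * dcr A i j = ∑ i, ∑ j, a i * b j * A i j := by
  have hrow : ∀ i, ∑ j, a i * b j * (rowMean A i - grandMean A) = 0 := fun i => by
    simp_rw [mul_comm (a i), mul_assoc, ← sum_mul, hb, zero_mul]
  have hcol : ∑ i, ∑ j, a i * b j * colMean A j = 0 := by
    rw [sum_comm]
    simp_rw [mul_comm (a _) (b _), mul_assoc, ← mul_sum, ← sum_mul, ha, zero_mul, mul_zero,
      sum_const_zero]
  have hsplit : ∀ i j, a i * b j * dcr A i j = a i * b j * A i j
      - a i * b j * (rowMean A i - grandMean A) - a i * b j * colMean A j := by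
    intro i j
    simp only [dcr]
    ring
  simp only [hsplit, sum_sub_distrib, hrow, hcol, sub_zero]

lemma sum_sum_mul_eq_hoeffding (hI : (I : ℝ) ≠ 0) (hJ : (J : ℝ) ≠ 0) (ha : ∑ i, a i = 0)
    (hb : ∑ j, b j = 0) (r c : ℝ) :
    ∑ i, ∑ j, (r / I + a i) * (c / J + b j) * A i j =
      r * c * grandMean A + c * ∑ i, a i * (rowMean A i - grandMean A)
      + r * ∑ j, b j * (colMean A j - grandMean A) + ∑ i, ∑ j, a i * b j * dcr A i j := by
  have hcol : ∑ i, ∑ j, b j * A i j = I * ∑ j, b j * colMean A j := by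
    rw [sum_comm, mul_sum]
    refine sum_congr rfl fun j _ => ?_
    rw [← mul_sum, sum_eq_mul_colMean A hI]
    ring
  have hrow : ∑ i, ∑ j, a i * A i j = J * ∑ i, a i * rowMean A i := by
    rw [mul_sum]
    refine sum_congr rfl fun i _ => ?_
    rw [← mul_sum, sum_eq_mul_rowMean A hJ]
    ring
  have hexpand : ∑ i, ∑ j, (r / I + a i) * (c / J + b j) * A i j =
      r / I * (c / J) * ∑ i, ∑ j, A i j + r / I * ∑ i, ∑ j, b j * A i j
      + c / J * ∑ i, ∑ j, a i * A i j + ∑ i, ∑ j, a i * b j * A i j := by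
    simp only [mul_sum, ← sum_add_distrib]
    exact sum_congr rfl fun i _ => sum_congr rfl fun j _ => by ring
  rw [hexpand, hcol, hrow, sum_sum_eq_mul_grandMean A hI hJ, sum_mul_rowMean_sub ha,
    sum_mul_colMean_sub hb, sum_sum_mul_dcr ha hb]
  field_simp
  ring

lemma sum_sum_mul_div_eq_hoeffding (hI : (I : ℝ) ≠ 0) (hJ : (J : ℝ) ≠ 0) (ha : ∑ i, a i = 0)
    (hb : ∑ j, b j = 0) {p q : ℝ} (hp : p ≠ 0) (hq : q ≠ 0) (s t : ℝ) :
    (∑ i, ∑ j, (p / I + s * a i) * (q / J + t * b j) * A i j) / (p * q) =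
      grandMean A + s * ((∑ i, a i * (rowMean A i - grandMean A)) / p)
      + t * ((∑ j, b j * (colMean A j - grandMean A)) / q)
      + s * t * ((∑ i, ∑ j, a i * b j * dcr A i j) / (p * q)) := by
  rw [sum_sum_mul_eq_hoeffding hI hJ (by rw [← mul_sum, ha, mul_zero])
    (by rw [← mul_sum, hb, mul_zero])]
  have hst : ∑ i, ∑ j, s * a i * (t * b j) * dcr A i j =
      s * t * ∑ i, ∑ j, a i * b j * dcr A i j := by
    simp only [mul_sum]
    exact sum_congr rfl fun _ _ => sum_congr rfl fun _ _ => by ring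
  rw [hst]
  simp only [mul_assoc, ← mul_sum]
  generalize ∑ i, a i * (rowMean A i - grandMean A) = X
  generalize ∑ j, b j * (colMean A j - grandMean A) = Y
  generalize ∑ i, ∑ j, a i * (b j * dcr A i j) = Z
  field_simp

end Hoeffding

section GroupIndicator

variable {n : ℕ} (s : Finset (Fin n))

lemma card_ite_compl (t : Bool) :
    (((if t then s else sᶜ).card : ℕ) : ℝ) = if t then (s.card : ℝ) else n - s.card := by
  cases t <;> simp [card_compl, Nat.cast_sub (s.card_le_univ.trans_eq (Fintype.card_fin n))]

lemma indicator_ite_compl (hn : (n : ℝ) ≠ 0) (t : Bool) (i : Fin n) :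
    (if i ∈ (if t then s else sᶜ) then (1 : ℝ) else 0) =
      (if t then (s.card : ℝ) else n - s.card) / n
        + (if t then 1 else -1) * ((if i ∈ s then 1 else 0) - s.card / n) := by
  cases t <;> by_cases hi : i ∈ s <;> simp [hi] <;> field_simp <;> ring

lemma sum_indicator_sub_card_div (hn : (n : ℝ) ≠ 0) :
    ∑ i, ((if i ∈ s then (1 : ℝ) else 0) - s.card / n) = 0 := by
  simp [sum_sub_distrib, mul_div_cancel₀ _ hn]

end GroupIndicator

lemma sum_sum_mem_eq_sum_sum_ite {I J : ℕ} (R : Finset (Fin I)) (C : Finset (Fin J))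
    (A : Fin I → Fin J → ℝ) :
    ∑ i ∈ R, ∑ j ∈ C, A i j =
      ∑ i, ∑ j, (if i ∈ R then (1 : ℝ) else 0) * (if j ∈ C then 1 else 0) * A i j := by
  simp [ite_mul, sum_ite_mem]

lemma IszR_ne_zero {I IT : ℕ} (hIT : 0 < IT) (hITI : IT < I) (γ : Gp) : IszR I IT γ ≠ 0 := by
  unfold IszR
  split_ifs
  exacts [by exact_mod_cast hIT.ne', sub_ne_zero.2 (by exact_mod_cast hITI.ne')]

lemma JszR_ne_zero {J JT : ℕ} (hJT : 0 < JT) (hJTJ : JT < J) (γ : Gp) : JszR J JT γ ≠ 0 := by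
  unfold JszR
  split_ifs
  exacts [by exact_mod_cast hJT.ne', sub_ne_zero.2 (by exact_mod_cast hJTJ.ne')]

lemma mhat_eq_hoeffding {I J IT JT : ℕ} (hIT : 0 < IT) (hITI : IT < I) (hJT : 0 < JT)
    (hJTJ : JT < J) (y : Gp → Fin I → Fin J → ℝ) (γ : Gp) {ω : Omg I J}
    (hω : ω ∈ designSets I J IT JT) :
    mhat y γ ω = grandMean (y γ) + etaB γ .tr * ebarB I J IT y γ ω
      + etaS γ .tr * ebarS I J JT y γ ω + etaB γ .tr * etaS γ .tr * ebarBS I J IT JT y γ ω := by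
  have hI : (I : ℝ) ≠ 0 := Nat.cast_ne_zero.2 (by omega)
  have hJ : (J : ℝ) ≠ 0 := Nat.cast_ne_zero.2 (by omega)
  have hIγ := IszR_ne_zero hIT hITI γ
  have hJγ := JszR_ne_zero hJT hJTJ γ
  obtain ⟨rfl, rfl⟩ : ω.1.card = IT ∧ ω.2.card = JT := by
    simpa [designSets, mem_powersetCard] using hω
  have hRcard : ((rowSet ω γ).card : ℝ) = IszR I ω.1.card γ := card_ite_compl ω.1 (rowT γ)
  have hCcard : ((colSet ω γ).card : ℝ) = JszR J ω.2.card γ := card_ite_compl ω.2 (colT γ)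
  have hR : ∀ i, (if i ∈ rowSet ω γ then (1 : ℝ) else 0)
      = IszR I ω.1.card γ / I + etaB γ .tr * (WB ω i - ω.1.card / I) :=
    indicator_ite_compl ω.1 hI (rowT γ)
  have hC : ∀ j, (if j ∈ colSet ω γ then (1 : ℝ) else 0)
      = JszR J ω.2.card γ / J + etaS γ .tr * (WS ω j - ω.2.card / J) :=
    indicator_ite_compl ω.2 hJ (colT γ)
  rw [mhat, sum_sum_mem_eq_sum_sum_ite, hRcard, hCcard]
  simp_rw [hR, hC]
  exact sum_sum_mul_div_eq_hoeffding hI hJ (sum_indicator_sub_card_div ω.1 hI)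
    (sum_indicator_sub_card_div ω.2 hJ) hIγ hJγ _ _

/- A point lies in `(n - 1).choose (k - 1)` of the `k`-subsets of an `n`-set, and
`n * (n - 1).choose (k - 1) = k * n.choose k`. -/
lemma sum_powersetCard_indicator_sub (n k : ℕ) (i : Fin n) :
    ∑ B ∈ powersetCard k (univ : Finset (Fin n)), ((if i ∈ B then (1 : ℝ) else 0) - k / n) = 0 := by
  rcases k with _ | k
  · simp
  rcases lt_or_ge n (k + 1) with hn | hkn
  · rw [powersetCard_eq_empty.2 (show #(univ : Finset (Fin n)) < k + 1 by simpa using hn),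
      sum_empty]
  obtain ⟨n, rfl⟩ : ∃ m, n = m + 1 := ⟨n - 1, by omega⟩
  have hcount :
      #{B ∈ powersetCard (k + 1) (univ : Finset (Fin (n + 1))) | i ∈ B} = n.choose k := by
    simpa using card_filter_powersetCard_subset {i} univ (k + 1) (subset_univ _) (by simp)
  have hchoose : ((n + 1 : ℕ) : ℝ) * n.choose k = (n + 1).choose (k + 1) * (k + 1 : ℕ) := by
    exact_mod_cast Nat.add_one_mul_choose_eq n k
  rw [sum_sub_distrib, sum_boole, hcount, sum_const, card_powersetCard, card_univ,
    Fintype.card_fin, nsmul_eq_mul]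
  field_simp
  linarith

lemma sum_powersetCard_sum_indicator_sub_mul (n k : ℕ) (h : Fin n → ℝ) :
    ∑ B ∈ powersetCard k (univ : Finset (Fin n)),
      ∑ i, ((if i ∈ B then (1 : ℝ) else 0) - k / n) * h i = 0 := by
  rw [sum_comm]
  exact sum_eq_zero fun i _ => by rw [← sum_mul, sum_powersetCard_indicator_sub, zero_mul]

section Design

variable {I J IT JT : ℕ}

lemma integral_smrd (f : Omg I J → ℝ) :
    ∫ ω, f ω ∂smrd I J IT JT = (#(designSets I J IT JT) : ℝ)⁻¹ *
      ∑ B ∈ powersetCard IT univ, ∑ S ∈ powersetCard JT univ, f (B, S) := by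
  rw [smrd, integral_uniformOn, designSets, sum_product]

lemma integral_smrd_eq_zero_of_sum_fst {f : Omg I J → ℝ}
    (hf : ∀ S, ∑ B ∈ powersetCard IT univ, f (B, S) = 0) : ∫ ω, f ω ∂smrd I J IT JT = 0 := by
  rw [integral_smrd, sum_comm]
  simp [hf]

lemma integral_smrd_eq_zero_of_sum_snd {f : Omg I J → ℝ}
    (hf : ∀ B, ∑ S ∈ powersetCard JT univ, f (B, S) = 0) : ∫ ω, f ω ∂smrd I J IT JT = 0 := by
  simp [integral_smrd, hf]

lemma WB_mk (B : Finset (Fin I)) (S : Finset (Fin J)) (i : Fin I) :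
    WB (B, S) i = if i ∈ B then 1 else 0 := rfl

lemma WS_mk (B : Finset (Fin I)) (S : Finset (Fin J)) (j : Fin J) :
    WS (B, S) j = if j ∈ S then 1 else 0 := rfl

variable (y : Gp → Fin I → Fin J → ℝ) (γ : Gp)

lemma sum_powersetCard_ebarB (S : Finset (Fin J)) :
    ∑ B ∈ powersetCard IT univ, ebarB I J IT y γ (B, S) = 0 := by
  simp only [ebarB, WB_mk, ← sum_div]
  rw [sum_powersetCard_sum_indicator_sub_mul, zero_div]

lemma sum_powersetCard_ebarS (B : Finset (Fin I)) :
    ∑ S ∈ powersetCard JT univ, ebarS I J JT y γ (B, S) = 0 := by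
  simp only [ebarS, WS_mk, ← sum_div]
  rw [sum_powersetCard_sum_indicator_sub_mul, zero_div]

lemma sum_powersetCard_ebarBS_fst (S : Finset (Fin J)) :
    ∑ B ∈ powersetCard IT univ, ebarBS I J IT JT y γ (B, S) = 0 := by
  simp only [ebarBS, WB_mk, WS_mk, ← sum_div, mul_assoc, ← mul_sum]
  rw [sum_powersetCard_sum_indicator_sub_mul, zero_div]

lemma sum_powersetCard_ebarBS_snd (B : Finset (Fin I)) :
    ∑ S ∈ powersetCard JT univ, ebarBS I J IT JT y γ (B, S) = 0 := by
  simp only [ebarBS, WB_mk, WS_mk, ← sum_div, mul_assoc, ← mul_sum]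
  rw [sum_comm]
  simp only [← mul_sum, sum_powersetCard_sum_indicator_sub_mul, mul_zero, sum_const_zero,
    zero_div]

lemma integral_ebarB : ∫ ω, ebarB I J IT y γ ω ∂smrd I J IT JT = 0 :=
  integral_smrd_eq_zero_of_sum_fst (sum_powersetCard_ebarB y γ)

lemma integral_ebarS : ∫ ω, ebarS I J JT y γ ω ∂smrd I J IT JT = 0 :=
  integral_smrd_eq_zero_of_sum_snd (sum_powersetCard_ebarS y γ)

lemma integral_ebarBS : ∫ ω, ebarBS I J IT JT y γ ω ∂smrd I J IT JT = 0 :=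
  integral_smrd_eq_zero_of_sum_fst (sum_powersetCard_ebarBS_fst y γ)

variable (γ' : Gp)

lemma cov_ebarB_ebarS : cov (smrd I J IT JT) (ebarB I J IT y γ) (ebarS I J JT y γ') = 0 := by
  rw [cov_eq_integral_mul (integral_ebarB y γ) (integral_ebarS y γ')]
  refine integral_smrd_eq_zero_of_sum_snd fun B => ?_
  simp only [ebarB, WB_mk]
  rw [← mul_sum, sum_powersetCard_ebarS, mul_zero]

lemma cov_ebarB_ebarBS :
    cov (smrd I J IT JT) (ebarB I J IT y γ) (ebarBS I J IT JT y γ') = 0 := by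
  rw [cov_eq_integral_mul (integral_ebarB y γ) (integral_ebarBS y γ')]
  refine integral_smrd_eq_zero_of_sum_snd fun B => ?_
  simp only [ebarB, WB_mk]
  rw [← mul_sum, sum_powersetCard_ebarBS_snd, mul_zero]

lemma cov_ebarS_ebarBS :
    cov (smrd I J IT JT) (ebarS I J JT y γ) (ebarBS I J IT JT y γ') = 0 := by
  rw [cov_eq_integral_mul (integral_ebarS y γ) (integral_ebarBS y γ')]
  refine integral_smrd_eq_zero_of_sum_fst fun S => ?_
  simp only [ebarS, WS_mk]
  rw [← mul_sum, sum_powersetCard_ebarBS_fst, mul_zero]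

end Design

theorem stmt9_general (I J IT JT : ℕ)
    (hIT1 : 1 ≤ IT) (hIT2 : IT ≤ I - 1) (hJT1 : 1 ≤ JT) (hJT2 : JT ≤ J - 1)
    (y : Gp → Fin I → Fin J → ℝ) :
    (∀ ω ∈ designSets I J IT JT,
        mhat y .tr ω = grandMean (y .tr) + ebarB I J IT y .tr ω + ebarS I J JT y .tr ω +
            ebarBS I J IT JT y .tr ω ∧
        mhat y .ib ω = grandMean (y .ib) + ebarB I J IT y .ib ω - ebarS I J JT y .ib ω -
            ebarBS I J IT JT y .ib ω ∧
        mhat y .is ω = grandMean (y .is) - ebarB I J IT y .is ω + ebarS I J JT y .is ω -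
            ebarBS I J IT JT y .is ω ∧
        mhat y .cc ω = grandMean (y .cc) - ebarB I J IT y .cc ω - ebarS I J JT y .cc ω +
            ebarBS I J IT JT y .cc ω) ∧
    (∀ γ : Gp,
        (∫ ω, ebarB I J IT y γ ω ∂(smrd I J IT JT)) = 0 ∧
        (∫ ω, ebarS I J JT y γ ω ∂(smrd I J IT JT)) = 0 ∧
        (∫ ω, ebarBS I J IT JT y γ ω ∂(smrd I J IT JT)) = 0) ∧
    (∀ γ γ' : Gp,
        cov (smrd I J IT JT) (ebarB I J IT y γ) (ebarS I J JT y γ') = 0 ∧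
        cov (smrd I J IT JT) (ebarB I J IT y γ) (ebarBS I J IT JT y γ') = 0 ∧
        cov (smrd I J IT JT) (ebarS I J JT y γ) (ebarBS I J IT JT y γ') = 0) := by
  refine ⟨fun ω hω => ?_, fun γ => ⟨integral_ebarB y γ, integral_ebarS y γ, integral_ebarBS y γ⟩,
    fun γ γ' => ⟨cov_ebarB_ebarS y γ γ', cov_ebarB_ebarBS y γ γ', cov_ebarS_ebarBS y γ γ'⟩⟩
  have h := fun γ => mhat_eq_hoeffding (by omega) (by omega) (by omega) (by omega) y γ hω
  simp only [h, etaB, etaS, rowT, colT]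
  norm_num [sub_eq_add_neg]

/-- Hoeffding decomposition of the group means, zero means of the
residual terms, and orthogonality between residual terms of different kinds. -/
theorem stmt9 (I J IT JT : ℕ) (hI : 2 ≤ I) (hJ : 2 ≤ J)
    (hIT1 : 1 ≤ IT) (hIT2 : IT ≤ I - 1) (hJT1 : 1 ≤ JT) (hJT2 : JT ≤ J - 1)
    (y : Gp → Fin I → Fin J → ℝ) :
    (∀ ω ∈ designSets I J IT JT,
        mhat y .tr ω = grandMean (y .tr) + ebarB I J IT y .tr ω + ebarS I J JT y .tr ω +
            ebarBS I J IT JT y .tr ω ∧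
        mhat y .ib ω = grandMean (y .ib) + ebarB I J IT y .ib ω - ebarS I J JT y .ib ω -
            ebarBS I J IT JT y .ib ω ∧
        mhat y .is ω = grandMean (y .is) - ebarB I J IT y .is ω + ebarS I J JT y .is ω -
            ebarBS I J IT JT y .is ω ∧
        mhat y .cc ω = grandMean (y .cc) - ebarB I J IT y .cc ω - ebarS I J JT y .cc ω +
            ebarBS I J IT JT y .cc ω) ∧
    (∀ γ : Gp,
        (∫ ω, ebarB I J IT y γ ω ∂(smrd I J IT JT)) = 0 ∧
        (∫ ω, ebarS I J JT y γ ω ∂(smrd I J IT JT)) = 0 ∧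
        (∫ ω, ebarBS I J IT JT y γ ω ∂(smrd I J IT JT)) = 0) ∧
    (∀ γ γ' : Gp,
        cov (smrd I J IT JT) (ebarB I J IT y γ) (ebarS I J JT y γ') = 0 ∧
        cov (smrd I J IT JT) (ebarB I J IT y γ) (ebarBS I J IT JT y γ') = 0 ∧
        cov (smrd I J IT JT) (ebarS I J JT y γ) (ebarBS I J IT JT y γ') = 0) :=
  stmt9_general I J IT JT hIT1 hIT2 hJT1 hJT2 y

end SMRD

end
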